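/- arXiv:0909.2108 — 3 statements merged into one kernel-verified Lean document; each statement's English description precedes it below -/
import Mathlib

section
/- Assume p ∈ (1/2,1) and let f_c < a < b < 1. Then almost surely, lim_{n→∞} (1/n) |R_n ∩ (a,b)| = p(b-a), where |·| denotes cardinality. -/
open MeasureTheory ProbabilityTheory Filter

noncomputable def evoS {Ω : Type*} (B U : ℕ → Ω → ℝ) (ω : Ω) : ℕ → Finset ℝ
  | 0 => ∅
  | n + 1 =>
      let S := evoS B U ω n
      if B (n + 1) ω = 1 then insert (U (n + 1) ω) S
      else if h : S.Nonempty then S.erase (S.min' h) else ∅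

/-- `R n = S n ∩ (f_c, 1)`. -/
noncomputable def evoR {Ω : Type*} (fc : ℝ) (B U : ℕ → Ω → ℝ) (ω : Ω) (n : ℕ) : Finset ℝ :=
  (evoS B U ω n).filter (fun x => fc < x ∧ x < 1)

/-!
For `x ∈ (0, 1)` let `N_n(x) = |S_n ∩ (-∞, x)|`. While the `U_k` are distinct, `N(x)` obeys
Lindley's recursion `N_{n+1} = max (N_n + ξ_{n+1}) 0`, where `ξ = 1` for a birth below `x`,
`ξ = -1` for a death and `ξ = 0` otherwise: a death removes the minimum of `S_n`, which lies
below `x` as soon as `N_n > 0`. The `ξ_n` are i.i.d. with mean `p x - q`, positive when `x > f_c`,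
so by the strong law the walk `W_n = ξ_1 + ⋯ + ξ_n` grows linearly, its minimum `C` is finite,
and `W_n ≤ N_n ≤ W_n - C` gives `N_n(x) / n → p x - q`. Finally
`|R_n ∩ (a, b)| = N_n(b) - N_n(a)` because a.s. no `U_k` equals `a`.
-/

open Topology Finset Function

section Lindley

variable {N W : ℕ → ℝ}

theorem lindley_bounds (hN0 : N 0 = 0) (hW0 : W 0 = 0)
    (hrec : ∀ n, N (n + 1) = max (N n + (W (n + 1) - W n)) 0) {C : ℝ} (hC : ∀ n, C ≤ W n)
    (n : ℕ) : W n ≤ N n ∧ N n ≤ W n - C := by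
  induction n with
  | zero => exact ⟨by linarith, by linarith [hC 0]⟩
  | succ n ih =>
    rw [hrec n]
    exact ⟨le_max_of_le_left (by linarith [ih.1]),
      max_le (by linarith [ih.2]) (by linarith [hC (n + 1)])⟩

theorem tendsto_div_of_lindley (hN0 : N 0 = 0) (hW0 : W 0 = 0)
    (hrec : ∀ n, N (n + 1) = max (N n + (W (n + 1) - W n)) 0) {m : ℝ} (hm : 0 < m)
    (hW : Tendsto (fun n : ℕ => W n / n) atTop (𝓝 m)) :
    Tendsto (fun n : ℕ => N n / n) atTop (𝓝 m) := by
  have hWtop : Tendsto W atTop atTop := by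
    refine (hW.pos_mul_atTop hm tendsto_natCast_atTop_atTop).congr' ?_
    filter_upwards [eventually_ne_atTop 0] with n hn
    field_simp
  obtain ⟨C, hC⟩ := bddBelow_range_of_tendsto_atTop_atTop hWtop
  have hbounds := lindley_bounds hN0 hW0 hrec (C := C) fun n => hC ⟨n, rfl⟩
  have hupper : Tendsto (fun n : ℕ => (W n - C) / n) atTop (𝓝 m) := by
    simpa [sub_div] using hW.sub (tendsto_const_div_atTop_nhds_zero_nat C)
  refine tendsto_of_tendsto_of_tendsto_of_le_of_le hW hupper (fun n => ?_) (fun n => ?_)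
  · exact div_le_div_of_nonneg_right (hbounds n).1 n.cast_nonneg
  · exact div_le_div_of_nonneg_right (hbounds n).2 n.cast_nonneg

end Lindley

theorem card_filter_lt_erase_min' {α : Type*} [LinearOrder α] (s : Finset α) (h : s.Nonempty)
    (x : α) : #((s.erase (s.min' h)).filter (· < x)) = #(s.filter (· < x)) - 1 := by
  rw [filter_erase]
  by_cases hmin : s.min' h < x
  · exact card_erase_of_mem (mem_filter.2 ⟨s.min'_mem h, hmin⟩)
  · rw [filter_eq_empty_iff.2 fun y hy hyx => hmin ((s.min'_le y hy).trans_lt hyx)]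
    rfl

theorem card_filter_Ioo_eq_sub {α : Type*} [LinearOrder α] {s : Finset α} {a b : α}
    (hab : a ≤ b) (ha : a ∉ s) :
    (#(s.filter fun x => a < x ∧ x < b) : ℝ) = #(s.filter (· < b)) - #(s.filter (· < a)) := by
  have hsplit : s.filter (· < b) = s.filter (· < a) ∪ s.filter fun x => a < x ∧ x < b := by
    rw [← filter_or]
    refine filter_congr fun x hx => ⟨fun hxb => ?_, ?_⟩
    · rcases lt_or_gt_of_ne (ne_of_mem_of_not_mem hx ha) with hxa | hax
      exacts [Or.inl hxa, Or.inr ⟨hax, hxb⟩]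
    · rintro (hxa | ⟨_, hxb⟩)
      exacts [hxa.trans_le hab, hxb]
  have hdisj : Disjoint (s.filter (· < a)) (s.filter fun x => a < x ∧ x < b) :=
    disjoint_filter.2 fun x _ hxa hx => hxa.not_gt hx.1
  rw [hsplit, card_union_of_disjoint hdisj]
  push_cast
  ring

/-- The increment `ξ` of Lindley's recursion for `N(x)`, as a function of `(B_n, U_n)`. -/
noncomputable def belowIncrement (x : ℝ) : ℝ × ℝ → ℝ :=
  ({1} ×ˢ Set.Iio x).indicator 1 - (Prod.fst ⁻¹' {0}).indicator 1

@[simp]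
theorem belowIncrement_zero (x u : ℝ) : belowIncrement x (0, u) = -1 := by
  simp [belowIncrement]

@[simp]
theorem belowIncrement_one (x u : ℝ) : belowIncrement x (1, u) = if u < x then 1 else 0 := by
  by_cases h : u < x <;> simp [belowIncrement, h]

theorem measurable_belowIncrement (x : ℝ) : Measurable (belowIncrement x) :=
  (measurable_const.indicator ((measurableSet_singleton 1).prod measurableSet_Iio)).sub
    (measurable_const.indicator (measurable_fst (measurableSet_singleton 0)))

section Evolution

variable {Ω : Type*} (B U : ℕ → Ω → ℝ) (ω : Ω)

theorem exists_eq_of_mem_evoS {c : ℝ} {n : ℕ} (hc : c ∈ evoS B U ω n) :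
    ∃ k < n, U (k + 1) ω = c := by
  induction n with
  | zero => simp [evoS] at hc
  | succ n ih =>
    have hprev : c ∈ evoS B U ω n → ∃ k < n + 1, U (k + 1) ω = c := fun h =>
      (ih h).imp fun k hk => ⟨hk.1.trans n.lt_succ_self, hk.2⟩
    simp only [evoS] at hc
    split_ifs at hc
    · rcases mem_insert.1 hc with rfl | hc
      exacts [⟨n, n.lt_succ_self, rfl⟩, hprev hc]
    · exact hprev (mem_of_mem_erase hc)
    · simp at hc

theorem card_filter_lt_evoS_succ (x : ℝ) (n : ℕ) (hB : B (n + 1) ω = 0 ∨ B (n + 1) ω = 1)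
    (hU : U (n + 1) ω ∉ evoS B U ω n) :
    (#((evoS B U ω (n + 1)).filter (· < x)) : ℝ) =
      max (#((evoS B U ω n).filter (· < x)) + belowIncrement x (B (n + 1) ω, U (n + 1) ω))
        0 := by
  rcases hB with hB | hB
  · have hdeath : #((evoS B U ω (n + 1)).filter (· < x)) =
        #((evoS B U ω n).filter (· < x)) - 1 := by
      by_cases hS : (evoS B U ω n).Nonempty
      · simp only [evoS, hB, zero_ne_one, if_false, dif_pos hS]
        exact card_filter_lt_erase_min' _ hS x
      · simp [evoS, hB, not_nonempty_iff_eq_empty.1 hS]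
    rw [hdeath, hB, belowIncrement_zero]
    rcases #((evoS B U ω n).filter (· < x)) with _ | k <;> simp
  · have hnotMem : U (n + 1) ω ∉ (evoS B U ω n).filter (· < x) :=
      fun h => hU (mem_filter.1 h).1
    simp only [evoS, hB, if_true, filter_insert, belowIncrement_one]
    split_ifs
    · rw [card_insert_of_notMem hnotMem, max_eq_left (by positivity)]
      push_cast
      rfl
    · simp

theorem tendsto_card_filter_lt_evoS_div (hB : ∀ n, B n ω = 0 ∨ B n ω = 1)
    (hU : Injective (U · ω)) {x m : ℝ} (hm : 0 < m)
    (hW : Tendsto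
      (fun n : ℕ => (∑ i ∈ range n, belowIncrement x (B (i + 1) ω, U (i + 1) ω)) / n)
      atTop (𝓝 m)) :
    Tendsto (fun n : ℕ => (#((evoS B U ω n).filter (· < x)) : ℝ) / n) atTop (𝓝 m) := by
  refine tendsto_div_of_lindley (by simp [evoS]) (by simp) (fun n => ?_) hm hW
  have hfresh : U (n + 1) ω ∉ evoS B U ω n := fun h => by
    obtain ⟨k, hk, hUk⟩ := exists_eq_of_mem_evoS B U ω h
    exact hk.ne (Nat.succ_injective (hU hUk))
  rw [sum_range_succ, add_sub_cancel_left]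
  exact card_filter_lt_evoS_succ B U ω x n (hB (n + 1)) hfresh

theorem filter_evoR_eq_filter_evoS {fc a b : ℝ} (ha : fc ≤ a) (hb : b ≤ 1) (n : ℕ) :
    (evoR fc B U ω n).filter (fun x => a < x ∧ x < b)
      = (evoS B U ω n).filter (fun x => a < x ∧ x < b) := by
  rw [evoR, filter_filter]
  exact filter_congr fun x _ => and_iff_right_of_imp fun h => ⟨ha.trans_lt h.1, h.2.trans_le hb⟩

theorem card_filter_evoR_eq_sub {fc a b : ℝ} (hfa : fc ≤ a) (hab : a ≤ b) (hb : b ≤ 1)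
    (ha : ∀ k, U k ω ≠ a) (n : ℕ) :
    (#((evoR fc B U ω n).filter fun x => a < x ∧ x < b) : ℝ) =
      #((evoS B U ω n).filter (· < b)) - #((evoS B U ω n).filter (· < a)) := by
  rw [filter_evoR_eq_filter_evoS B U ω hfa hb, card_filter_Ioo_eq_sub hab]
  intro haS
  obtain ⟨k, -, hk⟩ := exists_eq_of_mem_evoS B U ω haS
  exact ha (k + 1) hk

end Evolution

section Probability

variable {Ω : Type*} [MeasurableSpace Ω] {P : Measure Ω}

theorem ae_ne_of_indepFun {α : Type*} [MeasurableSpace α] [MeasurableEq α] [IsFiniteMeasure P]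
    {X Y : Ω → α} (hX : Measurable X) (hY : Measurable Y) (hXY : X ⟂ᵢ[P] Y)
    [NullSingletonClass (P.map Y)] : ∀ᵐ ω ∂P, X ω ≠ Y ω := by
  have hdiag : ∀ᵐ z ∂(P.map X).prod (P.map Y), z.1 ≠ z.2 :=
    (Measure.ae_prod_iff_ae_ae (measurableSet_eq_fun measurable_fst measurable_snd).compl).2
      (ae_of_all _ fun x => (Measure.ae_ne _ x).mono fun _ h => h.symm)
  rw [← (indepFun_iff_map_prod_eq_prod_map_map hX.aemeasurable hY.aemeasurable).1 hXY] at hdiag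
  exact ae_of_ae_map (hX.prodMk hY).aemeasurable hdiag

theorem ae_injective_of_pairwise_indepFun {ι α : Type*} [Countable ι] [MeasurableSpace α]
    [MeasurableEq α] [IsFiniteMeasure P] {X : ι → Ω → α} (hX : ∀ n, Measurable (X n))
    (hindep : Pairwise ((· ⟂ᵢ[P] ·) on X)) [∀ n, NullSingletonClass (P.map (X n))] :
    ∀ᵐ ω ∂P, Injective (X · ω) := by
  have hne : ∀ i j, ∀ᵐ ω ∂P, i ≠ j → X i ω ≠ X j ω := fun i j => by
    by_cases hij : i = j
    · exact ae_of_all _ fun _ h => absurd hij h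
    · exact (ae_ne_of_indepFun (hX i) (hX j) (hindep hij)).mono fun _ h _ => h
  filter_upwards [ae_all_iff.2 fun i => ae_all_iff.2 (hne i)] with ω hω i j
  exact not_imp_not.1 (hω i j)

theorem integrable_belowIncrement (μ : Measure (ℝ × ℝ)) [IsFiniteMeasure μ] (x : ℝ) :
    Integrable (belowIncrement x) μ :=
  ((integrable_const 1).indicator ((measurableSet_singleton 1).prod measurableSet_Iio)).sub
    ((integrable_const 1).indicator (measurable_fst (measurableSet_singleton 0)))

theorem integral_belowIncrement (μ : Measure (ℝ × ℝ)) [IsFiniteMeasure μ] (x : ℝ) :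
    ∫ q, belowIncrement x q ∂μ =
      μ.real ({1} ×ˢ Set.Iio x) - μ.real (Prod.fst ⁻¹' {0}) := by
  have hbirth := (measurableSet_singleton (1 : ℝ)).prod (measurableSet_Iio (a := x))
  have hdeath : MeasurableSet (Prod.fst ⁻¹' {0} : Set (ℝ × ℝ)) :=
    measurable_fst (measurableSet_singleton 0)
  rw [belowIncrement, integral_sub' ((integrable_const 1).indicator hbirth)
    ((integrable_const 1).indicator hdeath), integral_indicator_one hbirth,
    integral_indicator_one hdeath]

variable [IsProbabilityMeasure P] {p : ℝ} {B U : ℕ → Ω → ℝ}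

theorem ae_tendsto_sum_belowIncrement_div (hmB : ∀ n, Measurable (B n))
    (hmU : ∀ n, Measurable (U n)) (hindep : iIndepFun (Sum.elim B U) P)
    (hBdist : ∀ n, P.map (B n) =
      ENNReal.ofReal p • Measure.dirac 1 + ENNReal.ofReal (1 - p) • Measure.dirac 0)
    (hUdist : ∀ n, P.map (U n) = volume.restrict (Set.Ioo 0 1))
    (hp0 : 0 ≤ p) (hp1 : p ≤ 1) {x : ℝ} (hx0 : 0 ≤ x) (hx1 : x ≤ 1) :
    ∀ᵐ ω ∂P, Tendsto
      (fun n : ℕ => (∑ i ∈ range n, belowIncrement x (B (i + 1) ω, U (i + 1) ω)) / n)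
      atTop (𝓝 (p * x - (1 - p))) := by
  have hmY : ∀ k, Measurable fun ω => (B k ω, U k ω) := fun k => (hmB k).prodMk (hmU k)
  have hlaw : ∀ k, P.map (fun ω => (B k ω, U k ω)) = (P.map (B 1)).prod (P.map (U 1)) := by
    intro k
    rw [(indepFun_iff_map_prod_eq_prod_map_map (hmB k).aemeasurable (hmU k).aemeasurable).1
      (hindep.indepFun Sum.inl_ne_inr), hBdist, hUdist, hBdist, hUdist]
  have hξ := measurable_belowIncrement x
  set ξ : ℕ → Ω → ℝ := fun i ω => belowIncrement x (B (i + 1) ω, U (i + 1) ω)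
  have hident : ∀ i, IdentDistrib (ξ i) (ξ 0) P P := fun i =>
    (IdentDistrib.mk (hmY _).aemeasurable (hmY _).aemeasurable (by rw [hlaw, hlaw])).comp hξ
  have hpair : Pairwise ((· ⟂ᵢ[P] ·) on ξ) := fun i j hij =>
    (hindep.indepFun_prodMk_prodMk (Sum.rec hmB hmU) (.inl (i + 1)) (.inr (i + 1))
      (.inl (j + 1)) (.inr (j + 1)) (by simpa using hij) Sum.inl_ne_inr Sum.inr_ne_inl
      (by simpa using hij)).comp hξ hξ
  have hint : Integrable (ξ 0) P :=
    (integrable_map_measure hξ.aestronglyMeasurable (hmY 1).aemeasurable).1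
      (integrable_belowIncrement _ x)
  have hmean : P[ξ 0] = p * x - (1 - p) := by
    rw [← integral_map (hmY 1).aemeasurable hξ.aestronglyMeasurable, hlaw 1,
      integral_belowIncrement, ← Set.prod_univ, measureReal_prod_prod, measureReal_prod_prod,
      hBdist, hUdist]
    simp [measureReal_def, Set.Iio_inter_Ioo, min_eq_left hx1, hp0, hp1, hx0]
  simpa [hmean] using strong_law_ae_real ξ hint hpair hident

end Probability

/-- Theorem (b): for `f_c < a < b < 1`, almost surely
`(1/n) * |R_n ∩ (a,b)| → p * (b - a)`. -/
theorem stmt0 {Ω : Type*} [MeasurableSpace Ω] (P : Measure Ω) [IsProbabilityMeasure P]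
    (p : ℝ) (hp : 1 / 2 < p) (hp1 : p < 1)
    (B U : ℕ → Ω → ℝ)
    (hmB : ∀ n, Measurable (B n)) (hmU : ∀ n, Measurable (U n))
    (hB01 : ∀ n ω, B n ω = 0 ∨ B n ω = 1)
    (hindep : iIndepFun (Sum.elim B U) P)
    (hBdist : ∀ n, Measure.map (B n) P
      = ENNReal.ofReal p • Measure.dirac (1 : ℝ) + ENNReal.ofReal (1 - p) • Measure.dirac (0 : ℝ))
    (hUdist : ∀ n, Measure.map (U n) P = volume.restrict (Set.Ioo (0 : ℝ) 1))
    (a b : ℝ) (ha : (1 - p) / p < a) (hab : a < b) (hb : b < 1) :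
    ∀ᵐ ω ∂P, Tendsto
      (fun n : ℕ =>
        (((evoR ((1 - p) / p) B U ω n).filter (fun x => a < x ∧ x < b)).card : ℝ) / n)
      atTop (nhds (p * (b - a))) := by
  have hp0 : 0 < p := by linarith
  have hdrift : ∀ x, (1 - p) / p < x → 0 < p * x - (1 - p) := fun x hx => by
    rw [div_lt_iff₀ hp0] at hx
    linarith
  have ha0 : 0 < a := (div_pos (by linarith) hp0).trans ha
  have hUatomless : ∀ n, NullSingletonClass (P.map (U n)) := fun n => by
    rw [hUdist n]
    infer_instance
  have hslln := fun x hx0 hx1 => ae_tendsto_sum_belowIncrement_div hmB hmU hindep hBdist hUdist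
    hp0.le hp1.le (x := x) hx0 hx1
  filter_upwards [ae_injective_of_pairwise_indepFun hmU fun i j hij => hindep.indepFun
      (Sum.inr_injective.ne hij),
    ae_all_iff.2 fun k => ae_of_ae_map (hmU k).aemeasurable (Measure.ae_ne _ a),
    hslln a ha0.le (hab.trans hb).le, hslln b (ha0.trans hab).le hb.le]
    with ω hinj hne hWa hWb
  have hNa := tendsto_card_filter_lt_evoS_div B U ω (hB01 · ω) hinj (hdrift a ha) hWa
  have hNb := tendsto_card_filter_lt_evoS_div B U ω (hB01 · ω) hinj (hdrift b (ha.trans hab)) hWb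
  simp_rw [card_filter_evoR_eq_sub B U ω ha.le hab.le hb.le hne, sub_div]
  convert hNb.sub hNa using 2
  ring
end

section
/- Assume p ∈ (1/2,1). Then almost surely the set L_n is empty for infinitely many times n, i.e., P(L_n = ∅ for infinitely many n) = 1. -/
open MeasureTheory ProbabilityTheory Filter

/-- `L n = S n ∩ (0, f_c)`. -/
noncomputable def evoL {Ω : Type*} (fc : ℝ) (B U : ℕ → Ω → ℝ) (ω : Ω) (n : ℕ) : Finset ℝ :=
  (evoS B U ω n).filter (fun x => 0 < x ∧ x < fc)

/-!
Every death removes the least point of `S`, which lies in `L` as soon as `L ≠ ∅`. Hence `#L` is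
dominated by the walk reflected at `0` whose increments are `+1` for a birth in `(0, f_c)`, `0`
for a birth in `(f_c, 1)` and `-1` for a death. Since `p f_c = q` these i.i.d. increments are
centred, so their partial sums `W` form a martingale with bounded increments. Such a martingale
converges on the event where it is bounded below; `W` cannot converge because deaths occur
infinitely often (second Borel–Cantelli lemma), so it is a.s. unbounded below. Each time `W`
reaches a new minimum the reflected walk, and with it `L`, is empty.
-/

open Finset

theorem frequently_eq_zero_of_le_max_add {a x : ℕ → ℝ} (ha : ∀ n, 0 ≤ a n)
    (hstep : ∀ n, a (n + 1) ≤ max (a n + x (n + 1)) 0)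
    (hx : ¬BddBelow (Set.range fun n => ∑ k ∈ range n, x (k + 1))) :
    ∃ᶠ n in atTop, a n = 0 := by
  refine fun hne => hx ?_
  obtain ⟨m, hm⟩ := eventually_atTop.1 hne
  have hdrift : ∀ n ≥ m,
      a n - ∑ k ∈ range n, x (k + 1) ≤ a m - ∑ k ∈ range m, x (k + 1) := by
    intro n hn
    induction n, hn using Nat.le_induction with
    | base => rfl
    | succ n hmn ih =>
      have hpos : 0 < a (n + 1) := (ha _).lt_of_ne' (hm _ (hmn.trans n.le_succ))
      have : a (n + 1) ≤ a n + x (n + 1) := by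
        by_contra! h
        exact (hstep n).not_gt (max_lt h hpos)
      rw [sum_range_succ]
      linarith
  refine (isBoundedUnder_of_eventually_ge (a := ∑ k ∈ range m, x (k + 1) - a m) ?_)
    |>.bddBelow_range
  filter_upwards [eventually_ge_atTop m] with n hn
  linarith [hdrift n hn, ha n]

theorem MeasureTheory.Martingale.ae_not_bddBelow_of_frequently_le_abs_sub {Ω : Type*}
    {m0 : MeasurableSpace Ω} {μ : Measure Ω} [IsFiniteMeasure μ] {ℱ : Filtration ℕ m0}
    {f : ℕ → Ω → ℝ} {R : NNReal} {ε : ℝ} (hf : Martingale f ℱ μ)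
    (hbdd : ∀ᵐ ω ∂μ, ∀ i, |f (i + 1) ω - f i ω| ≤ R) (hε : 0 < ε)
    (hjump : ∀ᵐ ω ∂μ, ∃ᶠ n in atTop, ε ≤ |f (n + 1) ω - f n ω|) :
    ∀ᵐ ω ∂μ, ¬BddBelow (Set.range fun n => f n ω) := by
  filter_upwards [hf.bddAbove_range_iff_bddBelow_range hbdd,
    hf.submartingale.bddAbove_iff_exists_tendsto hbdd, hjump] with ω habove hconv hjump hbelow
  obtain ⟨c, hc⟩ := hconv.1 (habove.2 hbelow)
  have hincr : Tendsto (fun n => |f (n + 1) ω - f n ω|) atTop (nhds 0) := by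
    simpa using ((hc.comp (tendsto_add_atTop_nat 1)).sub hc).abs
  exact hjump ((hincr.eventually (gt_mem_nhds hε)).mono fun _ h => not_le.2 h)

section TimeFiltration

variable {Ω ι β : Type*} {m0 : MeasurableSpace Ω} [mβ : MeasurableSpace β] {μ : Measure Ω}
  {Y : ι → Ω → β} (τ : ι → ℕ)

/-- `τ i` is the time at which `Y i` is observed. -/
abbrev sigmaAtTime (Y : ι → Ω → β) (n : ℕ) : MeasurableSpace Ω :=
  ⨆ i ∈ {i | τ i = n}, MeasurableSpace.comap (Y i) mβ

def timeFiltration (hY : ∀ i, Measurable (Y i)) : Filtration ℕ m0 where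
  seq n := ⨆ i ∈ {i | τ i ≤ n}, MeasurableSpace.comap (Y i) mβ
  mono' _ _ hnm := biSup_mono fun _ hi => le_trans hi hnm
  le' _ := iSup₂_le fun i _ => (hY i).comap_le

variable {τ}

lemma comap_le_sigmaAtTime {i : ι} : MeasurableSpace.comap (Y i) mβ ≤ sigmaAtTime τ Y (τ i) :=
  le_iSup₂ (f := fun j (_ : j ∈ {j | τ j = τ i}) => MeasurableSpace.comap (Y j) mβ) i rfl

lemma sigmaAtTime_le_timeFiltration (hY : ∀ i, Measurable (Y i)) (n : ℕ) :
    sigmaAtTime τ Y n ≤ timeFiltration τ hY n :=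
  biSup_mono fun _ hi => le_of_eq hi

lemma indep_sigmaAtTime_timeFiltration (hY : ∀ i, Measurable (Y i)) (hind : iIndepFun Y μ)
    {m n : ℕ} (hnm : n < m) : Indep (sigmaAtTime τ Y m) (timeFiltration τ hY n) μ :=
  indep_iSup_of_disjoint (fun i => (hY i).comap_le) hind
    (Set.disjoint_left.2 fun _ hm hn => hnm.not_ge ((Set.mem_ofPred.1 hm) ▸ hn))

theorem martingale_partialSum_of_iIndepFun [IsFiniteMeasure μ] (hY : ∀ i, Measurable (Y i))
    (hind : iIndepFun Y μ) {X : ℕ → Ω → ℝ}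
    (hX : ∀ n, StronglyMeasurable[sigmaAtTime τ Y n] (X n)) (hint : ∀ n, Integrable (X n) μ)
    (hmean : ∀ n, μ[X n] = 0) :
    Martingale (fun n ω => ∑ k ∈ range n, X (k + 1) ω) (timeFiltration τ hY) μ := by
  refine martingale_of_condExp_sub_eq_zero_nat (fun n => ?_)
    (fun n => integrable_finsetSum _ fun k _ => hint (k + 1)) (fun n => ?_)
  · refine Finset.stronglyMeasurable_fun_sum _ fun k hk => (hX (k + 1)).mono ?_
    exact (sigmaAtTime_le_timeFiltration hY _).trans
      ((timeFiltration τ hY).mono (Finset.mem_range.1 hk))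
  · have hincr : (fun ω => ∑ k ∈ range (n + 1), X (k + 1) ω)
        - (fun ω => ∑ k ∈ range n, X (k + 1) ω) = X (n + 1) := by
      ext ω
      simp [sum_range_succ]
    rw [hincr]
    refine (condExp_indep_eq
      ((sigmaAtTime_le_timeFiltration hY _).trans ((timeFiltration τ hY).le _))
      ((timeFiltration τ hY).le n) (hX (n + 1))
      (indep_sigmaAtTime_timeFiltration hY hind n.lt_succ_self)).trans ?_
    simp only [hmean]
    rfl

end TimeFiltration

namespace EvoS

variable {Ω : Type*} {fc : ℝ} {B U : ℕ → Ω → ℝ} {ω : Ω}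

lemma pos_of_mem_evoS (hU : ∀ k, 0 < U k ω) : ∀ n, ∀ x ∈ evoS B U ω n, 0 < x := by
  intro n
  induction n with
  | zero => simp [evoS]
  | succ n ih =>
    intro x hx
    rw [evoS] at hx
    split_ifs at hx
    · rcases mem_insert.1 hx with rfl | hx
      exacts [hU (n + 1), ih x hx]
    · exact ih x (mem_of_mem_erase hx)
    · simp at hx

noncomputable def step (fc b u : ℝ) : ℝ :=
  if b = 1 then (if u ∈ Set.Ioo 0 fc then 1 else 0) else -1

lemma abs_step_le_one (fc b u : ℝ) : |step fc b u| ≤ 1 := by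
  unfold step
  split_ifs <;> norm_num

lemma step_of_ne_one {b : ℝ} (hb : b ≠ 1) (fc u : ℝ) : step fc b u = -1 := if_neg hb

lemma measurable_step {m : MeasurableSpace Ω} {b u : Ω → ℝ} (hb : Measurable[m] b)
    (hu : Measurable[m] u) : Measurable[m] fun ω => step fc (b ω) (u ω) :=
  Measurable.ite (hb (measurableSet_singleton 1))
    (Measurable.ite (hu measurableSet_Ioo) measurable_const measurable_const) measurable_const

lemma card_evoL_succ_le (hU : ∀ k, 0 < U k ω) (n : ℕ) :
    (#(evoL fc B U ω (n + 1)) : ℝ) ≤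
      max (#(evoL fc B U ω n) + step fc (B (n + 1) ω) (U (n + 1) ω)) 0 := by
  simp only [evoL, evoS, step, Set.mem_Ioo]
  split_ifs with hB hnew hS
  · rw [filter_insert, if_pos hnew]
    exact le_max_of_le_left (mod_cast card_insert_le _ _)
  · rw [filter_insert, if_neg hnew]
    simp
  · have hmin : ∀ y ∈ (evoS B U ω n).filter (fun x => 0 < x ∧ x < fc),
        (evoS B U ω n).min' hS ∈ (evoS B U ω n).filter fun x => 0 < x ∧ x < fc := by
      intro y hy
      rw [mem_filter] at hy ⊢
      exact ⟨min'_mem _ hS, pos_of_mem_evoS hU n _ (min'_mem _ hS),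
        (min'_le _ y hy.1).trans_lt hy.2.2⟩
    rw [filter_erase]
    rcases ((evoS B U ω n).filter fun x => 0 < x ∧ x < fc).eq_empty_or_nonempty with
      h | ⟨y, hy⟩
    · simp [h]
    · rw [card_erase_of_mem (hmin y hy), Nat.cast_sub (card_pos.2 ⟨y, hy⟩)]
      exact le_max_of_le_left (by simp)
  · simp

variable [MeasurableSpace Ω] {P : Measure Ω} {p : ℝ} {b u : Ω → ℝ}

lemma measure_preimage_one (hb : Measurable b)
    (hlaw : P.map b
      = ENNReal.ofReal p • Measure.dirac 1 + ENNReal.ofReal (1 - p) • Measure.dirac 0) :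
    P (b ⁻¹' {1}) = ENNReal.ofReal p := by
  rw [← Measure.map_apply hb (measurableSet_singleton 1), hlaw]
  simp

lemma measure_preimage_ne_one (hb : Measurable b)
    (hlaw : P.map b
      = ENNReal.ofReal p • Measure.dirac 1 + ENNReal.ofReal (1 - p) • Measure.dirac 0) :
    P (b ⁻¹' {1})ᶜ = ENNReal.ofReal (1 - p) := by
  rw [← Set.preimage_compl, ← Measure.map_apply hb (measurableSet_singleton 1).compl, hlaw]
  simp

lemma measure_preimage_Ioo (hu : Measurable u) (hlaw : P.map u = volume.restrict (Set.Ioo 0 1))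
    {a : ℝ} (ha : a ≤ 1) : P (u ⁻¹' Set.Ioo 0 a) = ENNReal.ofReal a := by
  rw [← Measure.map_apply hu measurableSet_Ioo, hlaw, Measure.restrict_apply measurableSet_Ioo,
    Set.inter_eq_left.2 (Set.Ioo_subset_Ioo_right ha), Real.volume_Ioo, sub_zero]

lemma integral_step [IsFiniteMeasure P] (hb : Measurable b) (hu : Measurable u)
    (hbu : IndepFun b u P)
    (hblaw : P.map b
      = ENNReal.ofReal p • Measure.dirac 1 + ENNReal.ofReal (1 - p) • Measure.dirac 0)
    (hulaw : P.map u = volume.restrict (Set.Ioo 0 1)) (hp0 : 0 ≤ p) (hp1 : p ≤ 1)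
    (hfc0 : 0 ≤ fc) (hfc1 : fc ≤ 1) :
    ∫ ω, step fc (b ω) (u ω) ∂P = p * fc - (1 - p) := by
  set birthL := b ⁻¹' {1} ∩ u ⁻¹' Set.Ioo 0 fc
  set death := (b ⁻¹' {1})ᶜ
  have hbirthL : MeasurableSet birthL :=
    (hb (measurableSet_singleton 1)).inter (hu measurableSet_Ioo)
  have hdeath : MeasurableSet death := (hb (measurableSet_singleton 1)).compl
  have hstep : (fun ω => step fc (b ω) (u ω)) = birthL.indicator 1 - death.indicator 1 := by
    ext ω
    by_cases h1 : b ω = 1 <;> by_cases h2 : u ω ∈ Set.Ioo 0 fc <;>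
      simp [step, birthL, death, h1, h2]
  have hPbirthL : P birthL = ENNReal.ofReal p * ENNReal.ofReal fc := by
    rw [hbu.measure_inter_preimage_eq_mul _ _ (measurableSet_singleton 1) measurableSet_Ioo,
      measure_preimage_one hb hblaw, measure_preimage_Ioo hu hulaw hfc1]
  rw [hstep, integral_sub' ((integrable_const 1).indicator hbirthL)
      ((integrable_const 1).indicator hdeath), integral_indicator_one hbirthL,
    integral_indicator_one hdeath, measureReal_def, measureReal_def, hPbirthL,
    measure_preimage_ne_one hb hblaw, ENNReal.toReal_mul, ENNReal.toReal_ofReal hp0,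
    ENNReal.toReal_ofReal hfc0, ENNReal.toReal_ofReal (sub_nonneg.2 hp1)]

theorem exists_martingale_sum_step [IsProbabilityMeasure P] (hmB : ∀ n, Measurable (B n))
    (hmU : ∀ n, Measurable (U n)) (hindep : iIndepFun (Sum.elim B U) P)
    (hBdist : ∀ n, P.map (B n)
      = ENNReal.ofReal p • Measure.dirac 1 + ENNReal.ofReal (1 - p) • Measure.dirac 0)
    (hUdist : ∀ n, P.map (U n) = volume.restrict (Set.Ioo 0 1)) (hp0 : 0 ≤ p) (hp1 : p ≤ 1)
    (hfc0 : 0 ≤ fc) (hfc1 : fc ≤ 1) (hfc : p * fc = 1 - p) :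
    ∃ ℱ : Filtration ℕ ‹MeasurableSpace Ω›,
      Martingale (fun n ω => ∑ k ∈ range n, step fc (B (k + 1) ω) (U (k + 1) ω)) ℱ P := by
  have hY : ∀ i, Measurable (Sum.elim B U i) := fun i => i.rec hmB hmU
  refine ⟨_, martingale_partialSum_of_iIndepFun (τ := Sum.elim id id) hY hindep (fun n => ?_)
    (fun n => .of_bound (measurable_step (hmB n) (hmU n)).aestronglyMeasurable 1
      (ae_of_all _ fun ω => abs_step_le_one _ _ _)) (fun n => ?_)⟩
  · exact (measurable_step
      (.of_comap_le (comap_le_sigmaAtTime (τ := Sum.elim id id) (Y := Sum.elim B U) (i := .inl n)))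
      (.of_comap_le (comap_le_sigmaAtTime (τ := Sum.elim id id) (Y := Sum.elim B U) (i := .inr n)))
      ).stronglyMeasurable
  · rw [integral_step (hmB n) (hmU n) (hindep.indepFun Sum.inl_ne_inr) (hBdist n) (hUdist n)
      hp0 hp1 hfc0 hfc1, hfc, sub_self]

lemma ae_frequently_ne_one (hmB : ∀ n, Measurable (B n)) (hind : iIndepFun B P)
    (hlaw : ∀ n, P.map (B n)
      = ENNReal.ofReal p • Measure.dirac 1 + ENNReal.ofReal (1 - p) • Measure.dirac 0)
    (hp1 : p < 1) : ∀ᵐ ω ∂P, ∃ᶠ n in atTop, B n ω ≠ 1 := by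
  have hmeas : ∀ n, MeasurableSet (B n ⁻¹' {1})ᶜ :=
    fun n => (hmB n (measurableSet_singleton 1)).compl
  have hiIndep : iIndepSet (fun n => (B n ⁻¹' {1})ᶜ) P :=
    (iIndepSet_iff_meas_biInter hmeas).2 fun S =>
      hind.measure_inter_preimage_eq_mul S fun _ _ => (measurableSet_singleton 1).compl
  have hsum : ∑' n, P (B n ⁻¹' {1})ᶜ = ⊤ := by
    simp_rw [measure_preimage_ne_one (hmB _) (hlaw _)]
    exact ENNReal.tsum_const_eq_top_of_ne_zero (by simpa using hp1)
  have : IsProbabilityMeasure P := hind.isProbabilityMeasure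
  filter_upwards [(ae_iff_measure_eq (MeasurableSet.measurableSet_limsup hmeas).nullMeasurableSet).2
    ((measure_limsup_eq_one hmeas hiIndep hsum).trans measure_univ.symm)] with ω hω
  exact mem_limsup_iff_frequently_mem.1 hω

lemma ae_forall_pos (hmU : ∀ n, Measurable (U n))
    (hlaw : ∀ n, P.map (U n) = volume.restrict (Set.Ioo 0 1)) :
    ∀ᵐ ω ∂P, ∀ n, 0 < U n ω := by
  refine ae_all_iff.2 fun n => ae_of_ae_map (hmU n).aemeasurable ?_
  rw [hlaw]
  exact (ae_restrict_mem measurableSet_Ioo).mono fun _ hx => hx.1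

end EvoS

open EvoS in
theorem stmt1_general {Ω : Type*} [MeasurableSpace Ω] (P : Measure Ω) [IsProbabilityMeasure P]
    (p : ℝ) (hp : 1 / 2 < p) (hp1 : p < 1)
    (B U : ℕ → Ω → ℝ)
    (hmB : ∀ n, Measurable (B n)) (hmU : ∀ n, Measurable (U n))
    (hindep : iIndepFun (Sum.elim B U) P)
    (hBdist : ∀ n, Measure.map (B n) P
      = ENNReal.ofReal p • Measure.dirac (1 : ℝ) + ENNReal.ofReal (1 - p) • Measure.dirac (0 : ℝ))
    (hUdist : ∀ n, Measure.map (U n) P = volume.restrict (Set.Ioo (0 : ℝ) 1)) :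
    ∀ᵐ ω ∂P, ∃ᶠ n in atTop, evoL ((1 - p) / p) B U ω n = ∅ := by
  set fc := (1 - p) / p
  have hp0 : 0 < p := by linarith
  obtain ⟨ℱ, hmart⟩ := exists_martingale_sum_step hmB hmU hindep hBdist hUdist hp0.le hp1.le
    (div_nonneg (by linarith) hp0.le) ((div_le_one hp0).2 (by linarith))
    (mul_div_cancel₀ _ hp0.ne')
  have hdeath := ae_frequently_ne_one (fun n => hmB (n + 1))
    (hindep.precomp (g := fun n => Sum.inl (n + 1)) fun _ _ h => by simpa using h)
    (fun n => hBdist (n + 1)) hp1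
  have hunbdd := hmart.ae_not_bddBelow_of_frequently_le_abs_sub (R := 1)
    (ae_of_all _ fun ω n => by simpa [sum_range_succ_sub_sum] using abs_step_le_one _ _ _) one_pos
    (hdeath.mono fun ω h => h.mono fun n hn => by simp [sum_range_succ_sub_sum, step_of_ne_one hn])
  filter_upwards [hunbdd, ae_forall_pos hmU hUdist] with ω hω hU
  exact (frequently_eq_zero_of_le_max_add (x := fun n => step fc (B n ω) (U n ω))
    (fun n => Nat.cast_nonneg _) (card_evoL_succ_le hU) hω).mono fun n h => card_eq_zero.1 (by exact_mod_cast h)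

/-- Almost surely, the set `L n` is empty for infinitely many times `n`. -/
theorem stmt1 {Ω : Type*} [MeasurableSpace Ω] (P : Measure Ω) [IsProbabilityMeasure P]
    (p : ℝ) (hp : 1 / 2 < p) (hp1 : p < 1)
    (B U : ℕ → Ω → ℝ)
    (hmB : ∀ n, Measurable (B n)) (hmU : ∀ n, Measurable (U n))
    (hB01 : ∀ n ω, B n ω = 0 ∨ B n ω = 1)
    (hindep : iIndepFun (Sum.elim B U) P)
    (hBdist : ∀ n, Measure.map (B n) P
      = ENNReal.ofReal p • Measure.dirac (1 : ℝ) + ENNReal.ofReal (1 - p) • Measure.dirac (0 : ℝ))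
    (hUdist : ∀ n, Measure.map (U n) P = volume.restrict (Set.Ioo (0 : ℝ) 1)) :
    ∀ᵐ ω ∂P, ∃ᶠ n in atTop, evoL ((1 - p) / p) B U ω n = ∅ :=
  stmt1_general P p hp hp1 B U hmB hmU hindep hBdist hUdist
end

section
/- Assume p ∈ (1/2,1). Define G_0 = min{k ≥ 1 : L_k ≠ ∅}, E_1 = min{k ≥ G_0 : L_k = ∅}, and recursively G_i and E_{i+1} as the successive times for L_· to become nonempty and to return to the empty set. Then for every ε > 0 and every n, P( k_n ≥ n^{1/2+ε} ) ≤ P(E_1 − G_0 < n)^{m_n − 1}, where m_n is the integer part of n^{1/2+ε} (and m_n ≥ 2). -/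
open MeasureTheory ProbabilityTheory Filter

/-- `k n = #{2 ≤ k ≤ n : |L (k-1)| = 1 and |L k| = 0}`. -/
noncomputable def evoK {Ω : Type*} (fc : ℝ) (B U : ℕ → Ω → ℝ) (ω : Ω) (n : ℕ) : ℕ :=
  Set.ncard {k : ℕ | 2 ≤ k ∧ k ≤ n ∧ (evoL fc B U ω (k - 1)).card = 1 ∧ (evoL fc B U ω k).card = 0}

/-- `G₀ = min {k ≥ 1 : L k ≠ ∅}`. -/
noncomputable def evoG0 {Ω : Type*} (fc : ℝ) (B U : ℕ → Ω → ℝ) (ω : Ω) : ℕ :=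
  sInf {k : ℕ | 1 ≤ k ∧ evoL fc B U ω k ≠ ∅}

/-- `E₁ = min {k ≥ G₀ : L k = ∅}`. -/
noncomputable def evoE1 {Ω : Type*} (fc : ℝ) (B U : ℕ → Ω → ℝ) (ω : Ω) : ℕ :=
  sInf {k : ℕ | evoG0 fc B U ω ≤ k ∧ evoL fc B U ω k = ∅}

/-!
Almost surely the `U i` are positive and pairwise distinct. Then the least element of `S k` lies
in `(0, f_c)` as soon as `L k` is nonempty, so `|L k|` is the random walk on `ℕ`, reflected at `0`,
whose i.i.d. increments are `+1` (a birth in `(0, f_c)`), `0` (a birth outside) and `-1` (a death),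
and `k_n` counts its steps from `1` to `0` before time `n`. Cutting the path after the first such
step, where the walk restarts from `0` driven by fresh independent increments, gives
`P(k_n ≥ m) ≤ P(k_n ≥ 1) ^ m`; and `k_n ≥ 1` exhibits an excursion of `L` away from `∅` shorter
than `n`, so that `E₁ - G₀ < n`.
-/

def reflectedWalk (f : ℕ → ℤ) : ℕ → ℕ
  | 0 => 0
  | k + 1 => (reflectedWalk f k + f k).toNat

def returnsToZero (f : ℕ → ℤ) (r : ℕ) : Finset ℕ :=
  (Finset.range r).filter fun j => reflectedWalk f j = 1 ∧ reflectedWalk f (j + 1) = 0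

lemma reflectedWalk_shift {f : ℕ → ℤ} {t : ℕ} (ht : reflectedWalk f t = 0) (i : ℕ) :
    reflectedWalk (fun k => f (t + k)) i = reflectedWalk f (t + i) := by
  induction i with
  | zero => exact ht.symm
  | succ i ih => rw [reflectedWalk, ih, ← add_assoc, reflectedWalk]

lemma dependsOn_reflectedWalk (k : ℕ) : DependsOn (reflectedWalk · k) (Set.Iio k) := by
  intro f g hfg
  induction k with
  | zero => rfl
  | succ k ih =>
    simp only [reflectedWalk, ih fun i hi => hfg i (by simp at hi ⊢; omega), hfg k (by simp)]

lemma dependsOn_returnsToZero (r : ℕ) : DependsOn (returnsToZero · r) (Set.Iio r) := by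
  intro f g hfg
  refine Finset.filter_congr fun j hj => ?_
  have hj : j < r := Finset.mem_range.1 hj
  have h₀ : reflectedWalk f j = reflectedWalk g j :=
    dependsOn_reflectedWalk j fun i hi => hfg i (lt_trans hi hj)
  have h₁ : reflectedWalk f (j + 1) = reflectedWalk g (j + 1) :=
    dependsOn_reflectedWalk (j + 1) fun i hi => hfg i (Set.mem_Iio.2 (Nat.lt_of_lt_of_le hi hj))
  rw [h₀, h₁]

lemma returnsToZero_mono (f : ℕ → ℤ) {r s : ℕ} (h : r ≤ s) :
    returnsToZero f r ⊆ returnsToZero f s :=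
  Finset.filter_subset_filter _ (Finset.range_subset_range.2 h)

lemma card_returnsToZero_add {f : ℕ → ℤ} {t : ℕ} (ht : reflectedWalk f t = 0) (r : ℕ) :
    (returnsToZero f (t + r)).card
      = (returnsToZero f t).card + (returnsToZero (fun k => f (t + k)) r).card := by
  rw [returnsToZero, Finset.range_add, Finset.filter_union, Finset.card_union_of_disjoint
    (Finset.disjoint_filter_filter (Finset.disjoint_range_addLeftEmbedding t _)),
    Finset.filter_map, Finset.card_map]
  congr 2
  refine Finset.filter_congr fun j _ => ?_
  simp [reflectedWalk_shift ht, ← add_assoc]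

lemma returnsToZero_eq_singleton_min' {f : ℕ → ℤ} {r : ℕ} (h : (returnsToZero f r).Nonempty) :
    returnsToZero f ((returnsToZero f r).min' h + 1) = {(returnsToZero f r).min' h} := by
  have hmin := (returnsToZero f r).min'_mem h
  have hle : ∀ i ∈ returnsToZero f r, (returnsToZero f r).min' h ≤ i :=
    fun i hi => Finset.min'_le _ i hi
  set j := (returnsToZero f r).min' h
  ext i
  simp only [returnsToZero, Finset.mem_filter, Finset.mem_range, Finset.mem_singleton] at hmin hle ⊢
  constructor
  · rintro ⟨hi, hi'⟩
    have := hle i ⟨by omega, hi'⟩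
    omega
  · rintro rfl
    exact ⟨by omega, hmin.2⟩

lemma exists_returnsToZero_eq_singleton {f : ℕ → ℤ} {r M : ℕ}
    (h : M + 1 ≤ (returnsToZero f r).card) :
    ∃ j < r, returnsToZero f (j + 1) = {j} ∧
      M ≤ (returnsToZero (fun k => f (j + 1 + k)) (r - (j + 1))).card := by
  have hne : (returnsToZero f r).Nonempty := Finset.card_pos.1 (by omega)
  have hmem := (returnsToZero f r).min'_mem hne
  have hfirst := returnsToZero_eq_singleton_min' hne
  set j := (returnsToZero f r).min' hne
  simp only [returnsToZero, Finset.mem_filter, Finset.mem_range] at hmem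
  refine ⟨j, hmem.1, hfirst, ?_⟩
  have hsplit := card_returnsToZero_add hmem.2.2 (r - (j + 1))
  rw [Nat.add_sub_cancel' hmem.1, hfirst, Finset.card_singleton] at hsplit
  omega

lemma eq_of_returnsToZero_eq_singleton {f : ℕ → ℤ} {j j' : ℕ}
    (h : returnsToZero f (j + 1) = {j}) (h' : returnsToZero f (j' + 1) = {j'}) : j = j' := by
  rcases le_total j j' with hle | hle
  · simpa [h, h'] using returnsToZero_mono f (Nat.succ_le_succ hle)
  · simpa [h, h', eq_comm] using returnsToZero_mono f (Nat.succ_le_succ hle)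

section Independence

variable {Ω : Type*} {mΩ : MeasurableSpace Ω} {P : Measure Ω}

lemma ProbabilityTheory.iIndep.iIndep_biSup [IsProbabilityMeasure P] {ι κ : Type*}
    {m : ι → MeasurableSpace Ω} (h_le : ∀ i, m i ≤ mΩ) (h : iIndep m P) {g : κ → Set ι}
    (hg : Pairwise fun j j' => Disjoint (g j) (g j')) :
    iIndep (fun j => ⨆ i ∈ g j, m i) P := by
  classical
  rw [iIndep_iff]
  intro s
  induction s using Finset.induction_on with
  | empty => simp
  | insert j s hj ih =>
    intro f hf
    have hdisj : Disjoint (g j) (⋃ j' ∈ s, g j') :=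
      Set.disjoint_iUnion₂_right.2 fun j' hj' => hg (ne_of_mem_of_not_mem hj' hj).symm
    have hs : MeasurableSet[⨆ i ∈ ⋃ j' ∈ s, g j', m i] (⋂ j' ∈ s, f j') :=
      Finset.measurableSet_biInter s fun j' hj' =>
        (biSup_mono fun i hi => Set.subset_biUnion_of_mem (u := g) hj' hi :
          ⨆ i ∈ g j', m i ≤ _) _ (hf j' (Finset.mem_insert_of_mem hj'))
    rw [Finset.set_biInter_insert, Finset.prod_insert hj,
      (Indep_iff _ _ P).1 (indep_iSup_of_disjoint h_le h hdisj) _ _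
        (hf j (Finset.mem_insert_self j s)) hs,
      ih fun j' hj' => hf j' (Finset.mem_insert_of_mem hj')]

lemma ProbabilityTheory.iIndepFun.prodMk_of_sumElim [IsProbabilityMeasure P] {ι β : Type*}
    [MeasurableSpace β] {B U : ι → Ω → β} (hB : ∀ i, Measurable (B i)) (hU : ∀ i, Measurable (U i))
    (h : iIndepFun (Sum.elim B U) P) : iIndepFun (fun i ω => (B i ω, U i ω)) P := by
  rw [iIndepFun_iff_iIndep] at h ⊢
  have hle : ∀ k, MeasurableSpace.comap (Sum.elim B U k) ‹_› ≤ mΩ := by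
    rintro (i | i)
    exacts [(hB i).comap_le, (hU i).comap_le]
  have hdisj : Pairwise fun i j : ι =>
      Disjoint ({.inl i, .inr i} : Set (ι ⊕ ι)) {.inl j, .inr j} := by
    intro i j hij
    simp [Set.disjoint_left, hij]
  convert h.iIndep_biSup hle hdisj using 2 with i
  simp only [iSup_insert, iSup_singleton, Sum.elim_inl, Sum.elim_inr]
  exact MeasurableSpace.comap_prodMk _ _

lemma MeasureTheory.measurableSet_cylinderEvents_of_dependsOn {ι β : Type*} [MeasurableSpace β]
    [Countable β] [MeasurableSingletonClass β] {s : Finset ι} {A : Set (ι → β)}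
    (hA : DependsOn (· ∈ A) s) : MeasurableSet[cylinderEvents (s : Set ι)] A := by
  have hpre : A = (s : Set ι).domRestrict ⁻¹' ((s : Set ι).domRestrict '' A) := by
    ext f
    refine ⟨fun hf => ⟨f, hf, rfl⟩, fun ⟨g, hg, hgf⟩ => ?_⟩
    rwa [← show (g ∈ A) = (f ∈ A) from hA fun i hi => congrFun hgf ⟨i, hi⟩]
  rw [hpre]
  exact measurable_restrict_cylinderEvents _ (MeasurableSet.of_discrete)

lemma ProbabilityTheory.iIndepFun.map_shift_eq {β : Type*} [MeasurableSpace β] {X : ℕ → Ω → β}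
    (hX : ∀ i, Measurable (X i)) (h : iIndepFun X P) (hident : ∀ i, P.map (X i) = P.map (X 0))
    (t : ℕ) : P.map (fun ω k => X (t + k) ω) = P.map (fun ω k => X k ω) := by
  rw [(h.precomp (add_right_injective t)).map_fun_eq_infinitePi_map fun k => hX (t + k),
    h.map_fun_eq_infinitePi_map hX]
  simp_rw [hident]

lemma ProbabilityTheory.iIndepFun.measure_shift_preimage {β : Type*} [MeasurableSpace β]
    {X : ℕ → Ω → β} (hX : ∀ i, Measurable (X i)) (h : iIndepFun X P)
    (hident : ∀ i, P.map (X i) = P.map (X 0)) (t : ℕ) {C : Set (ℕ → β)} (hC : MeasurableSet C) :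
    P {ω | (fun k => X (t + k) ω) ∈ C} = P {ω | (fun k => X k ω) ∈ C} := by
  change P ((fun ω k => X (t + k) ω) ⁻¹' C) = P ((fun ω k => X k ω) ⁻¹' C)
  rw [← Measure.map_apply (measurable_pi_lambda _ fun k => hX (t + k)) hC,
    h.map_shift_eq hX hident, Measure.map_apply (measurable_pi_lambda _ hX) hC]

lemma ProbabilityTheory.iIndepFun.measure_inter_shift_eq_mul {β : Type*} [mβ : MeasurableSpace β]
    {X : ℕ → Ω → β} (hX : ∀ i, Measurable (X i)) (h : iIndepFun X P) {t : ℕ}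
    {A C : Set (ℕ → β)} (hA : MeasurableSet[cylinderEvents (Set.Iio t)] A)
    (hC : MeasurableSet C) :
    P ({ω | (fun k => X k ω) ∈ A} ∩ {ω | (fun k => X (t + k) ω) ∈ C})
      = P {ω | (fun k => X k ω) ∈ A} * P {ω | (fun k => X (t + k) ω) ∈ C} := by
  have hind := indep_iSup_of_disjoint (fun i => (hX i).comap_le)
    ((iIndepFun_iff_iIndep _ _ _).1 h) (Set.Iio_disjoint_Ici (le_refl t))
  refine (Indep_iff _ _ P).1 hind _ _ ?_ ?_
  · refine (measurable_cylinderEvents_iff.2 fun i hi => ?_) hA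
    exact (comap_measurable (X i)).mono (le_biSup (fun i => mβ.comap (X i)) hi) le_rfl
  · refine ((@measurable_pi_iff Ω ℕ (fun _ => β) (⨆ i ∈ Set.Ici t, mβ.comap (X i)) _ _).2
      fun k => ?_) hC
    exact (comap_measurable (X (t + k))).mono
      (le_biSup (fun i => mβ.comap (X i)) (Set.mem_Ici.2 (Nat.le_add_right t k))) le_rfl

lemma MeasureTheory.Measure.prod_diagonal_eq_zero {α : Type*} [MeasurableSpace α]
    [MeasurableEq α] (μ ν : Measure α) [SFinite ν] [NullSingletonClass ν] :
    μ.prod ν {p | p.1 = p.2} = 0 := by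
  rw [Measure.prod_apply (measurableSet_eq_fun measurable_fst measurable_snd)]
  simp [Set.preimage]

lemma ProbabilityTheory.IndepFun.measure_setOf_eq_eq_zero [IsFiniteMeasure P] {α : Type*}
    [MeasurableSpace α] [MeasurableEq α] {X Y : Ω → α} (hX : Measurable X) (hY : Measurable Y)
    (h : IndepFun X Y P) [NullSingletonClass (P.map Y)] : P {ω | X ω = Y ω} = 0 := by
  have hdiag := measurableSet_eq_fun (α := α × α) measurable_fst measurable_snd
  rw [show {ω | X ω = Y ω} = (fun ω => (X ω, Y ω)) ⁻¹' {p | p.1 = p.2} from rfl,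
    ← Measure.map_apply (hX.prodMk hY) hdiag,
    (indepFun_iff_map_prod_eq_prod_map_map hX.aemeasurable hY.aemeasurable).1 h]
  exact Measure.prod_diagonal_eq_zero _ _

lemma ProbabilityTheory.iIndepFun.ae_injective [IsFiniteMeasure P] {ι α : Type*} [Countable ι]
    [MeasurableSpace α] [MeasurableEq α] {X : ι → Ω → α} (hX : ∀ i, Measurable (X i))
    (h : iIndepFun X P) [∀ i, NullSingletonClass (P.map (X i))] :
    ∀ᵐ ω ∂P, Function.Injective (X · ω) := by
  have hne : ∀ᵐ ω ∂P, ∀ i j, i ≠ j → X i ω ≠ X j ω := by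
    refine ae_all_iff.2 fun i => ae_all_iff.2 fun j => ?_
    by_cases hij : i = j
    · exact Eventually.of_forall fun ω hne => absurd hij hne
    · refine (ae_iff.2 ?_).mono fun ω hω _ => hω
      simpa using (h.indepFun hij).measure_setOf_eq_eq_zero (hX i) (hX j)
  filter_upwards [hne] with ω hω i j hij
  by_contra hne
  exact hω i j hne hij

end Independence

section Renewal

variable {Ω : Type*} {mΩ : MeasurableSpace Ω} {P : Measure Ω} {X : ℕ → Ω → ℤ}

lemma measurableSet_cylinderEvents_returnsToZero (r : ℕ) (p : Finset ℕ → Prop) :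
    MeasurableSet[cylinderEvents (Set.Iio r)] {f : ℕ → ℤ | p (returnsToZero f r)} := by
  rw [← Finset.coe_range]
  refine measurableSet_cylinderEvents_of_dependsOn fun f g hfg => ?_
  have : returnsToZero f r = returnsToZero g r := dependsOn_returnsToZero r (by simpa using hfg)
  simp only [Set.mem_ofPred_eq, this]

lemma measure_succ_le_card_returnsToZero_le_sum (hX : ∀ i, Measurable (X i))
    (h : iIndepFun X P) (hident : ∀ i, P.map (X i) = P.map (X 0)) (M r : ℕ) :
    P {ω | M + 1 ≤ (returnsToZero (fun k => X k ω) r).card}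
      ≤ ∑ j ∈ Finset.range r, P {ω | returnsToZero (fun k => X k ω) (j + 1) = {j}}
          * P {ω | M ≤ (returnsToZero (fun k => X k ω) (r - (j + 1))).card} := by
  let F : ℕ → Set (ℕ → ℤ) := fun j => {f | returnsToZero f (j + 1) = {j}}
  let G : ℕ → Set (ℕ → ℤ) := fun j => {f | M ≤ (returnsToZero f (r - (j + 1))).card}
  have hF : ∀ j, MeasurableSet[cylinderEvents (Set.Iio (j + 1))] (F j) := fun j =>
    measurableSet_cylinderEvents_returnsToZero (j + 1) (· = {j})
  have hG : ∀ j, MeasurableSet (G j) := fun j =>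
    cylinderEvents_le_pi _ (measurableSet_cylinderEvents_returnsToZero _ (M ≤ ·.card))
  have hsub : {ω | M + 1 ≤ (returnsToZero (fun k => X k ω) r).card}
      ⊆ ⋃ j ∈ Finset.range r,
          {ω | (fun k => X k ω) ∈ F j} ∩ {ω | (fun k => X (j + 1 + k) ω) ∈ G j} := by
    intro ω hω
    obtain ⟨j, hj, hfirst, hrest⟩ := exists_returnsToZero_eq_singleton hω
    exact Set.mem_biUnion (Finset.mem_range.2 hj) ⟨hfirst, hrest⟩
  refine (measure_mono hsub).trans ((measure_biUnion_finset_le _ _).trans_eq ?_)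
  refine Finset.sum_congr rfl fun j _ => ?_
  rw [h.measure_inter_shift_eq_mul hX (hF j) (hG j), h.measure_shift_preimage hX hident _ (hG j)]
  rfl

lemma sum_measure_returnsToZero_eq_singleton_le (hX : ∀ i, Measurable (X i)) {r n : ℕ}
    (hr : r ≤ n) :
    ∑ j ∈ Finset.range r, P {ω | returnsToZero (fun k => X k ω) (j + 1) = {j}}
      ≤ P {ω | (returnsToZero (fun k => X k ω) n).Nonempty} := by
  have hdisj : Set.PairwiseDisjoint ↑(Finset.range r)
      fun j => {ω | returnsToZero (fun k => X k ω) (j + 1) = {j}} :=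
    fun j _ j' _ hjj' => Set.disjoint_left.2 fun ω hj hj' =>
      hjj' (eq_of_returnsToZero_eq_singleton hj hj')
  have hmeas : ∀ j, MeasurableSet {ω | returnsToZero (fun k => X k ω) (j + 1) = {j}} := fun j =>
    measurable_pi_lambda _ hX
      (cylinderEvents_le_pi _ (measurableSet_cylinderEvents_returnsToZero (j + 1) (· = {j})))
  rw [← measure_biUnion_finset hdisj fun j _ => hmeas j]
  refine measure_mono fun ω hω => ?_
  obtain ⟨j, hj, hfirst⟩ := Set.mem_iUnion₂.1 hω
  have hfirst : returnsToZero (fun k => X k ω) (j + 1) = {j} := hfirst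
  have hjn : j + 1 ≤ n := by simp only [Finset.mem_range] at hj; omega
  exact ⟨j, returnsToZero_mono _ hjn (hfirst ▸ Finset.mem_singleton_self j)⟩

lemma measure_le_card_returnsToZero_le_pow [IsProbabilityMeasure P] (hX : ∀ i, Measurable (X i))
    (h : iIndepFun X P) (hident : ∀ i, P.map (X i) = P.map (X 0)) {n : ℕ} (M : ℕ) {r : ℕ}
    (hr : r ≤ n) :
    P {ω | M ≤ (returnsToZero (fun k => X k ω) r).card}
      ≤ P {ω | (returnsToZero (fun k => X k ω) n).Nonempty} ^ M := by
  induction M generalizing r with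
  | zero => simp
  | succ M ih =>
    calc P {ω | M + 1 ≤ (returnsToZero (fun k => X k ω) r).card}
        ≤ ∑ j ∈ Finset.range r, P {ω | returnsToZero (fun k => X k ω) (j + 1) = {j}}
            * P {ω | M ≤ (returnsToZero (fun k => X k ω) (r - (j + 1))).card} :=
          measure_succ_le_card_returnsToZero_le_sum hX h hident M r
      _ ≤ (∑ j ∈ Finset.range r, P {ω | returnsToZero (fun k => X k ω) (j + 1) = {j}})
            * P {ω | (returnsToZero (fun k => X k ω) n).Nonempty} ^ M := by
          rw [Finset.sum_mul]
          gcongr with j hj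
          exact ih (by omega)
      _ ≤ P {ω | (returnsToZero (fun k => X k ω) n).Nonempty} ^ (M + 1) := by
          rw [pow_succ']
          gcongr
          exact sum_measure_returnsToZero_eq_singleton_le hX hr

end Renewal

lemma Finset.card_filter_erase_min' {α : Type*} [LinearOrder α] {s : Finset α} (hs : s.Nonempty)
    {p : α → Prop} [DecidablePred p] (hp : ∀ x ∈ s, ∀ y ∈ s, y ≤ x → p x → p y) :
    ((s.erase (s.min' hs)).filter p).card = (s.filter p).card - 1 := by
  rw [Finset.filter_erase]
  by_cases hmin : p (s.min' hs)
  · exact Finset.card_erase_of_mem (Finset.mem_filter.2 ⟨s.min'_mem hs, hmin⟩)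
  · have hempty : s.filter p = ∅ := Finset.filter_eq_empty_iff.2 fun x hx hpx =>
      hmin (hp x hx _ (s.min'_mem hs) (s.min'_le x hx) hpx)
    simp [hempty]

section Model

variable {Ω : Type*} (fc : ℝ) (B U : ℕ → Ω → ℝ) (ω : Ω)

noncomputable def birthDeathIncrement (q : ℝ × ℝ) : ℤ :=
  if q.1 = 1 then if q.2 ∈ Set.Ioo 0 fc then 1 else 0 else -1

noncomputable def evoIncrement (i : ℕ) (ω : Ω) : ℤ :=
  birthDeathIncrement fc (B (i + 1) ω, U (i + 1) ω)

variable {B U ω}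

lemma exists_eq_of_mem_evoS_s10 {k : ℕ} {x : ℝ} (hx : x ∈ evoS B U ω k) :
    ∃ i, 1 ≤ i ∧ i ≤ k ∧ U i ω = x := by
  induction k with
  | zero => simp [evoS] at hx
  | succ k ih =>
    simp only [evoS] at hx
    split_ifs at hx with hb hS
    · rcases Finset.mem_insert.1 hx with rfl | hx
      · exact ⟨k + 1, by omega, le_rfl, rfl⟩
      · obtain ⟨i, hi1, hik, hi⟩ := ih hx
        exact ⟨i, hi1, by omega, hi⟩
    · obtain ⟨i, hi1, hik, hi⟩ := ih (Finset.mem_of_mem_erase hx)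
      exact ⟨i, hi1, by omega, hi⟩
    · simp at hx

lemma card_evoL_succ (hpos : ∀ i, 0 < U i ω) (hinj : Function.Injective (U · ω)) (k : ℕ) :
    (evoL fc B U ω (k + 1)).card
      = ((evoL fc B U ω k).card + evoIncrement fc B U k ω).toNat := by
  simp only [evoL, evoS, evoIncrement, birthDeathIncrement]
  split_ifs with hb hu hS
  · have hnew : U (k + 1) ω ∉ evoS B U ω k := fun hmem => by
      obtain ⟨i, _, hik, hi⟩ := exists_eq_of_mem_evoS_s10 hmem
      exact absurd (hinj hi) (by omega)
    rw [Finset.filter_insert, if_pos (show 0 < U (k + 1) ω ∧ U (k + 1) ω < fc from hu),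
      Finset.card_insert_of_notMem fun h => hnew (Finset.mem_filter.1 h).1]
    omega
  · rw [Finset.filter_insert, if_neg (show ¬(0 < U (k + 1) ω ∧ U (k + 1) ω < fc) from hu)]
    omega
  · rw [Finset.card_filter_erase_min' hS fun x _ y hy hyx hx =>
      ⟨(exists_eq_of_mem_evoS_s10 hy).elim fun i ⟨_, _, hi⟩ => hi ▸ hpos i, hyx.trans_lt hx.2⟩]
    omega
  · simp [Finset.not_nonempty_iff_eq_empty.1 hS]

lemma card_evoL_eq_reflectedWalk (hpos : ∀ i, 0 < U i ω) (hinj : Function.Injective (U · ω))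
    (k : ℕ) : (evoL fc B U ω k).card = reflectedWalk (evoIncrement fc B U · ω) k := by
  induction k with
  | zero => simp [evoL, evoS, reflectedWalk]
  | succ k ih => rw [card_evoL_succ fc hpos hinj, ih, reflectedWalk]

lemma evoK_eq_card_returnsToZero (hpos : ∀ i, 0 < U i ω) (hinj : Function.Injective (U · ω))
    (n : ℕ) : evoK fc B U ω n = (returnsToZero (evoIncrement fc B U · ω) n).card := by
  have hset : {k | 2 ≤ k ∧ k ≤ n ∧ (evoL fc B U ω (k - 1)).card = 1 ∧ (evoL fc B U ω k).card = 0}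
      = (· + 1) '' ↑(returnsToZero (evoIncrement fc B U · ω) n) := by
    ext k
    simp only [card_evoL_eq_reflectedWalk fc hpos hinj, returnsToZero, Set.mem_ofPred_eq,
      Finset.coe_filter, Set.mem_image, Finset.mem_range]
    constructor
    · rintro ⟨h2, hkn, h1, h0⟩
      exact ⟨k - 1, ⟨by omega, h1, by rwa [Nat.sub_add_cancel (by omega)]⟩, by omega⟩
    · rintro ⟨j, ⟨hjn, h1, h0⟩, rfl⟩
      have hj : j ≠ 0 := by rintro rfl; simp [reflectedWalk] at h1
      exact ⟨by omega, by omega, by simpa using h1, h0⟩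
  rw [evoK, hset, Set.ncard_image_of_injective _ (add_left_injective 1), Set.ncard_coe_finset]

lemma evoE1_sub_evoG0_le {j : ℕ} (hj : (evoL fc B U ω j).Nonempty)
    (hj' : evoL fc B U ω (j + 1) = ∅) : evoE1 fc B U ω - evoG0 fc B U ω ≤ j := by
  have hj0 : j ≠ 0 := by rintro rfl; simp [evoL, evoS] at hj
  have hmem : j ∈ {k | 1 ≤ k ∧ evoL fc B U ω k ≠ ∅} := ⟨by omega, hj.ne_empty⟩
  have hG : evoG0 fc B U ω ≤ j := Nat.sInf_le hmem
  have hG1 : 1 ≤ evoG0 fc B U ω := (Nat.sInf_mem ⟨j, hmem⟩).1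
  have hE : evoE1 fc B U ω ≤ j + 1 := Nat.sInf_le ⟨by omega, hj'⟩
  omega

lemma evoE1_sub_evoG0_lt (hpos : ∀ i, 0 < U i ω) (hinj : Function.Injective (U · ω)) {n : ℕ}
    (h : (returnsToZero (evoIncrement fc B U · ω) n).Nonempty) :
    evoE1 fc B U ω - evoG0 fc B U ω < n := by
  obtain ⟨j, hj⟩ := h
  simp only [returnsToZero, Finset.mem_filter, Finset.mem_range,
    ← card_evoL_eq_reflectedWalk fc hpos hinj] at hj
  exact (evoE1_sub_evoG0_le fc (Finset.card_pos.1 (by omega))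
    (Finset.card_eq_zero.1 hj.2.2)).trans_lt hj.1

lemma measurable_birthDeathIncrement : Measurable (birthDeathIncrement fc) :=
  Measurable.ite (measurable_fst (measurableSet_singleton 1))
    (Measurable.ite (measurable_snd measurableSet_Ioo) measurable_const measurable_const)
    measurable_const

variable [MeasurableSpace Ω] {P : Measure Ω}

lemma measurable_evoIncrement (hmB : ∀ i, Measurable (B i)) (hmU : ∀ i, Measurable (U i))
    (i : ℕ) : Measurable (evoIncrement fc B U i) :=
  (measurable_birthDeathIncrement fc).comp ((hmB _).prodMk (hmU _))

lemma iIndepFun_evoIncrement [IsProbabilityMeasure P] (hmB : ∀ i, Measurable (B i))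
    (hmU : ∀ i, Measurable (U i)) (hindep : iIndepFun (Sum.elim B U) P) :
    iIndepFun (evoIncrement fc B U) P :=
  ((hindep.prodMk_of_sumElim hmB hmU).precomp Nat.succ_injective).comp
    (fun _ => birthDeathIncrement fc) fun _ => measurable_birthDeathIncrement fc

lemma map_evoIncrement [IsFiniteMeasure P] (hmB : ∀ i, Measurable (B i))
    (hmU : ∀ i, Measurable (U i)) (hindep : iIndepFun (Sum.elim B U) P)
    (hBident : ∀ i, P.map (B i) = P.map (B 0)) (hUident : ∀ i, P.map (U i) = P.map (U 0))
    (i : ℕ) : P.map (evoIncrement fc B U i) = P.map (evoIncrement fc B U 0) := by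
  have hpair : ∀ i, P.map (fun ω => (B i ω, U i ω)) = (P.map (B 0)).prod (P.map (U 0)) :=
    fun i => by
      rw [(indepFun_iff_map_prod_eq_prod_map_map (hmB i).aemeasurable (hmU i).aemeasurable).1
        (hindep.indepFun Sum.inl_ne_inr), hBident, hUident]
  have hcomp : ∀ i, P.map (evoIncrement fc B U i)
      = (P.map (fun ω => (B (i + 1) ω, U (i + 1) ω))).map (birthDeathIncrement fc) := fun i =>
    (Measure.map_map (measurable_birthDeathIncrement fc) ((hmB _).prodMk (hmU _))).symm
  rw [hcomp, hcomp, hpair, hpair]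

lemma ae_forall_pos_and_injective [IsFiniteMeasure P] (hmU : ∀ i, Measurable (U i))
    (hindep : iIndepFun (Sum.elim B U) P)
    (hUdist : ∀ i, P.map (U i) = volume.restrict (Set.Ioo (0 : ℝ) 1)) :
    ∀ᵐ ω ∂P, (∀ i, 0 < U i ω) ∧ Function.Injective (U · ω) := by
  have hUatom : ∀ i, NullSingletonClass (P.map (U i)) := fun i => by
    rw [hUdist i]; infer_instance
  refine (ae_all_iff.2 fun i => ?_).and
    ((hindep.precomp Sum.inr_injective).ae_injective fun i => hmU i)
  refine ae_of_ae_map (hmU i).aemeasurable ?_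
  rw [hUdist i]
  exact ae_restrict_of_forall_mem measurableSet_Ioo fun x hx => hx.1

end Model

theorem stmt10_general {Ω : Type*} [MeasurableSpace Ω] (P : Measure Ω) [IsProbabilityMeasure P]
    (p : ℝ)
    (B U : ℕ → Ω → ℝ)
    (hmB : ∀ n, Measurable (B n)) (hmU : ∀ n, Measurable (U n))
    (hindep : iIndepFun (Sum.elim B U) P)
    (hBdist : ∀ n, Measure.map (B n) P
      = ENNReal.ofReal p • Measure.dirac (1 : ℝ) + ENNReal.ofReal (1 - p) • Measure.dirac (0 : ℝ))
    (hUdist : ∀ n, Measure.map (U n) P = volume.restrict (Set.Ioo (0 : ℝ) 1))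
    (ε : ℝ) (n : ℕ) :
    P {ω | (n : ℝ) ^ ((1 : ℝ) / 2 + ε) ≤ (evoK ((1 - p) / p) B U ω n : ℝ)}
      ≤ (P {ω | evoE1 ((1 - p) / p) B U ω - evoG0 ((1 - p) / p) B U ω < n})
          ^ (Nat.floor ((n : ℝ) ^ ((1 : ℝ) / 2 + ε)) - 1) := by
  set fc := (1 - p) / p
  set m := ⌊(n : ℝ) ^ ((1 : ℝ) / 2 + ε)⌋₊
  have hBident : ∀ i, P.map (B i) = P.map (B 0) := fun i => (hBdist i).trans (hBdist 0).symm
  have hUident : ∀ i, P.map (U i) = P.map (U 0) := fun i => (hUdist i).trans (hUdist 0).symm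
  have hgood := ae_forall_pos_and_injective hmU hindep hUdist
  calc P {ω | (n : ℝ) ^ ((1 : ℝ) / 2 + ε) ≤ (evoK fc B U ω n : ℝ)}
      ≤ P {ω | m ≤ (returnsToZero (fun k => evoIncrement fc B U k ω) n).card} :=
        measure_mono_ae <| hgood.mono fun ω ⟨hpos, hinj⟩ hω =>
          show m ≤ _ from evoK_eq_card_returnsToZero fc hpos hinj n ▸ Nat.floor_le_of_le hω
    _ ≤ P {ω | (returnsToZero (fun k => evoIncrement fc B U k ω) n).Nonempty} ^ m :=
        measure_le_card_returnsToZero_le_pow (fun i => measurable_evoIncrement fc hmB hmU i)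
          (iIndepFun_evoIncrement fc hmB hmU hindep)
          (map_evoIncrement fc hmB hmU hindep hBident hUident) m le_rfl
    _ ≤ P {ω | evoE1 fc B U ω - evoG0 fc B U ω < n} ^ m :=
        pow_le_pow_left₀ zero_le (measure_mono_ae <| hgood.mono fun ω ⟨hpos, hinj⟩ =>
          evoE1_sub_evoG0_lt fc hpos hinj) m
    _ ≤ P {ω | evoE1 fc B U ω - evoG0 fc B U ω < n} ^ (m - 1) :=
        pow_le_pow_of_le_one zero_le prob_le_one (Nat.sub_le m 1)

/-- `P(k_n ≥ n^(1/2+ε)) ≤ P(E₁ − G₀ < n)^(m_n − 1)`, where `m_n = ⌊n^(1/2+ε)⌋ ≥ 2`. -/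
theorem stmt10 {Ω : Type*} [MeasurableSpace Ω] (P : Measure Ω) [IsProbabilityMeasure P]
    (p : ℝ) (hp : 1 / 2 < p) (hp1 : p < 1)
    (B U : ℕ → Ω → ℝ)
    (hmB : ∀ n, Measurable (B n)) (hmU : ∀ n, Measurable (U n))
    (hB01 : ∀ n ω, B n ω = 0 ∨ B n ω = 1)
    (hindep : iIndepFun (Sum.elim B U) P)
    (hBdist : ∀ n, Measure.map (B n) P
      = ENNReal.ofReal p • Measure.dirac (1 : ℝ) + ENNReal.ofReal (1 - p) • Measure.dirac (0 : ℝ))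
    (hUdist : ∀ n, Measure.map (U n) P = volume.restrict (Set.Ioo (0 : ℝ) 1))
    (ε : ℝ) (hε : 0 < ε) (n : ℕ)
    (hm : 2 ≤ Nat.floor ((n : ℝ) ^ ((1 : ℝ) / 2 + ε))) :
    P {ω | (n : ℝ) ^ ((1 : ℝ) / 2 + ε) ≤ (evoK ((1 - p) / p) B U ω n : ℝ)}
      ≤ (P {ω | evoE1 ((1 - p) / p) B U ω - evoG0 ((1 - p) / p) B U ω < n})
          ^ (Nat.floor ((n : ℝ) ^ ((1 : ℝ) / 2 + ε)) - 1) :=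
  stmt10_general P p B U hmB hmU hindep hBdist hUdist ε n
end
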